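/- arXiv:1503.05656 — 3 statements merged into one kernel-verified Lean document; each statement's English description precedes it below -/
import Mathlib

section
/- In the Densest-k-Subgraph reduction instance: for every H contained in V and every vertex w in V, QU(H union {w}) >= QU(H); that is, annotating an additional non-leaf concept never decreases the queriability of the design. -/
open scoped Classical BigOperators

namespace DkSReduction

variable {V : Type} [Fintype V] [DecidableEq V]

/-- The leaf concepts of the Densest-k-Subgraph reduction instance:
the disjoint union of the vertices and the edges of `G`. -/
abbrev Leaf (G : SimpleGraph V) [DecidableRel G.Adj] : Type :=
  V ⊕ {e : Sym2 V // e ∈ G.edgeFinset}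

/-- The trace of a leaf `l` w.r.t. a design `H ⊆ V`: the vertices of `H` equal to
`l` (if `l` is a vertex), resp. the endpoints of `l` lying in `H` (if `l` is an
edge). -/
noncomputable def tau (G : SimpleGraph V) [DecidableRel G.Adj] (H : Finset V) :
    Leaf G → Finset V
  | Sum.inl v => H.filter (fun w => w = v)
  | Sum.inr e => H.filter (fun w => w ∈ e.val)

/-- A leaf is a singleton for `H` if its trace is nonempty and no other leaf has
the same trace. -/
def IsSingleton (G : SimpleGraph V) [DecidableRel G.Adj] (H : Finset V)
    (l : Leaf G) : Prop :=
  (tau G H l).Nonempty ∧ ∀ l' : Leaf G, l' ≠ l → tau G H l' ≠ tau G H l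

/-- The number of singleton leaves for `H`. -/
noncomputable def sigma (G : SimpleGraph V) [DecidableRel G.Adj] (H : Finset V) : ℕ :=
  (Finset.univ.filter (IsSingleton G H)).card

/-- The queriability of a design `H ⊆ V` in the reduction instance:
`QU(H) = u*d*( σ(H)*m*log n + (n + m - σ(H)) )`. -/
noncomputable def QU (G : SimpleGraph V) [DecidableRel G.Adj] (u d : ℝ)
    (H : Finset V) : ℝ :=
  u * d * ((sigma G H : ℝ) * (G.edgeFinset.card : ℝ) * Real.log (Fintype.card V : ℝ)
      + ((Fintype.card V : ℝ) + (G.edgeFinset.card : ℝ) - (sigma G H : ℝ)))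

end DkSReduction

namespace DkSReduction

variable {V : Type} [Fintype V] [DecidableEq V] (G : SimpleGraph V) [DecidableRel G.Adj]

theorem tau_inter_of_subset {H H' : Finset V} (h : H ⊆ H') (l : Leaf G) :
    tau G H' l ∩ H = tau G H l := by
  cases l <;> simp only [tau, Finset.filter_inter, Finset.inter_eq_right.mpr h]

theorem tau_mono {H H' : Finset V} (h : H ⊆ H') (l : Leaf G) : tau G H l ⊆ tau G H' l := by
  rw [← tau_inter_of_subset G h l]
  exact Finset.inter_subset_left

-- Traces for `H` are the traces for a larger `H'` cut down to `H`, so leaves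
-- separated by `H` stay separated by `H'`.
theorem IsSingleton.mono {H H' : Finset V} (h : H ⊆ H') {l : Leaf G}
    (hl : IsSingleton G H l) : IsSingleton G H' l := by
  obtain ⟨hne, hsep⟩ := hl
  refine ⟨hne.mono (tau_mono G h l), fun l' hl' heq => hsep l' hl' ?_⟩
  rw [← tau_inter_of_subset G h l, ← tau_inter_of_subset G h l', heq]

theorem sigma_mono : Monotone (sigma G) := fun _ _ h =>
  Finset.card_le_card fun _ hl => by
    simp only [Finset.mem_filter, Finset.mem_univ, true_and] at hl ⊢
    exact hl.mono G h

theorem QU_le_QU_of_sigma_le {u d : ℝ} (hud : 0 ≤ u * d)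
    (hml : 1 ≤ (G.edgeFinset.card : ℝ) * Real.log (Fintype.card V : ℝ)) {H H' : Finset V}
    (hσ : sigma G H ≤ sigma G H') : QU G u d H ≤ QU G u d H' := by
  have hσ' : (sigma G H : ℝ) ≤ sigma G H' := by exact_mod_cast hσ
  unfold QU
  -- `QU` is affine in `σ` with slope `u * d * (m * log n - 1) ≥ 0`.
  exact mul_le_mul_of_nonneg_left (by nlinarith) hud

end DkSReduction

open DkSReduction

theorem QU_insert_mono_general {V : Type} [Fintype V] [DecidableEq V]
    (G : SimpleGraph V) [DecidableRel G.Adj]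
    (u d : ℝ) (hu : 0 < u) (hd : 0 < d)
    (hml : 1 ≤ (G.edgeFinset.card : ℝ) * Real.log (Fintype.card V : ℝ))
    (H : Finset V) (w : V) :
    QU G u d H ≤ QU G u d (H ∪ {w}) :=
  QU_le_QU_of_sigma_le G (mul_pos hu hd).le hml (sigma_mono G Finset.subset_union_left)

/-- In the Densest-k-Subgraph reduction instance, annotating an
additional non-leaf concept never decreases queriability:
`QU(H ∪ {w}) ≥ QU(H)`. -/
theorem QU_insert_mono {V : Type} [Fintype V] [DecidableEq V]
    (G : SimpleGraph V) [DecidableRel G.Adj]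
    (hn : 2 ≤ Fintype.card V) (u d : ℝ) (hu : 0 < u) (hd : 0 < d)
    (hml : 1 ≤ (G.edgeFinset.card : ℝ) * Real.log (Fintype.card V : ℝ))
    (H : Finset V) (w : V) :
    QU G u d H ≤ QU G u d (H ∪ {w}) :=
  QU_insert_mono_general G u d hu hd hml H w
end

section
/- In the Densest-k-Subgraph reduction instance: for every H contained in V, a leaf l is a singleton for H if and only if either l is an edge with both endpoints in H, or l is a vertex v in H all of whose neighbors in G lie in H. Consequently sigma(H) = |E(H)| + |{v in H : N_G(v) is contained in H}|, where E(H) denotes the set of edges of G with both endpoints in H and N_G(v) the neighborhood of v in G. -/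
open scoped Classical BigOperators

/-!
A vertex leaf `v ∈ H` has trace `{v}`, and an edge leaf with both endpoints in `H` has a
two-element trace, which determines the edge. An edge `ab` with `a ∈ H`, `b ∉ H` has the same
trace `{a}` as the vertex leaf `a`, so neither of them is a singleton; this is the only way a
leaf with nonempty trace can fail to be one.
-/

namespace DkSReduction

variable {V : Type} [Fintype V] [DecidableEq V] {G : SimpleGraph V} [DecidableRel G.Adj]
  {H : Finset V}

@[simp]
theorem mem_tau_inl {v w : V} : w ∈ tau G H (Sum.inl v) ↔ w ∈ H ∧ w = v := by
  simp [tau]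

@[simp]
theorem mem_tau_inr {e : {e : Sym2 V // e ∈ G.edgeFinset}} {w : V} :
    w ∈ tau G H (Sum.inr e) ↔ w ∈ H ∧ w ∈ e.val := by
  simp [tau]

theorem tau_inr_eq_tau_inl {a b : V} (hab : G.Adj a b) (hb : b ∉ H) :
    tau G H (Sum.inr ⟨s(a, b), G.mem_edgeFinset.2 hab⟩) = tau G H (Sum.inl a) := by
  ext w
  simp only [mem_tau_inr, mem_tau_inl, Sym2.mem_iff]
  constructor
  · rintro ⟨hw, rfl | rfl⟩
    exacts [⟨hw, rfl⟩, absurd hw hb]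
  · rintro ⟨hw, rfl⟩
    exact ⟨hw, Or.inl rfl⟩

theorem isSingleton_inl_iff {v : V} :
    IsSingleton G H (Sum.inl v) ↔ v ∈ H ∧ ∀ w : V, G.Adj v w → w ∈ H := by
  constructor
  · rintro ⟨⟨x, hx⟩, huniq⟩
    obtain ⟨hv, rfl⟩ := mem_tau_inl.1 hx
    refine ⟨hv, fun w hw => ?_⟩
    by_contra hwH
    exact huniq _ Sum.inr_ne_inl (tau_inr_eq_tau_inl hw hwH)
  · rintro ⟨hv, hnbr⟩
    refine ⟨⟨v, mem_tau_inl.2 ⟨hv, rfl⟩⟩, ?_⟩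
    have hv_tau : v ∈ tau G H (Sum.inl v) := mem_tau_inl.2 ⟨hv, rfl⟩
    rintro (v' | ⟨e, he⟩) hne heq <;> rw [← heq] at hv_tau
    · exact hne (congrArg Sum.inl (mem_tau_inl.1 hv_tau).2.symm)
    · obtain ⟨w, rfl⟩ := Sym2.mem_iff_exists.1 (mem_tau_inr.1 hv_tau).2
      have hvw : G.Adj v w := G.mem_edgeFinset.1 he
      have hw_tau : w ∈ tau G H (Sum.inr ⟨s(v, w), he⟩) :=
        mem_tau_inr.2 ⟨hnbr w hvw, Sym2.mem_mk_right v w⟩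
      rw [heq] at hw_tau
      exact hvw.ne (mem_tau_inl.1 hw_tau).2.symm

theorem isSingleton_inr_iff {e : {e : Sym2 V // e ∈ G.edgeFinset}} :
    IsSingleton G H (Sum.inr e) ↔ ∀ v ∈ e.val, v ∈ H := by
  obtain ⟨e, he⟩ := e
  constructor
  · rintro ⟨⟨x, hx_tau⟩, huniq⟩
    obtain ⟨hx, hxe⟩ := mem_tau_inr.1 hx_tau
    obtain ⟨y, rfl⟩ := Sym2.mem_iff_exists.1 hxe
    have hy : y ∈ H := by
      by_contra hy
      exact huniq _ Sum.inl_ne_inr (tau_inr_eq_tau_inl (G.mem_edgeFinset.1 he) hy).symm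
    simp only [Sym2.mem_iff]
    rintro v (rfl | rfl)
    exacts [hx, hy]
  · intro hH
    cases e using Sym2.ind with
    | h a b =>
      have hab : a ≠ b := (G.mem_edgeFinset.1 he).ne
      have ha_tau : a ∈ tau G H (Sum.inr ⟨s(a, b), he⟩) :=
        mem_tau_inr.2 ⟨hH a (Sym2.mem_mk_left a b), Sym2.mem_mk_left a b⟩
      have hb_tau : b ∈ tau G H (Sum.inr ⟨s(a, b), he⟩) :=
        mem_tau_inr.2 ⟨hH b (Sym2.mem_mk_right a b), Sym2.mem_mk_right a b⟩
      refine ⟨⟨a, ha_tau⟩, ?_⟩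
      rintro (v | e') hne heq <;> rw [← heq] at ha_tau hb_tau
      · exact hab ((mem_tau_inl.1 ha_tau).2.trans (mem_tau_inl.1 hb_tau).2.symm)
      · refine hne (congrArg Sum.inr (Subtype.ext ?_))
        exact (Sym2.mem_and_mem_iff hab).1 ⟨(mem_tau_inr.1 ha_tau).2, (mem_tau_inr.1 hb_tau).2⟩

theorem sigma_eq_card_add_card :
    sigma G H = (G.edgeFinset.filter (fun e => ∀ v ∈ e, v ∈ H)).card
        + (H.filter (fun v => ∀ w : V, G.Adj v w → w ∈ H)).card := by
  have hsplit : Finset.univ.filter (IsSingleton G H) =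
      (H.filter (fun v => ∀ w : V, G.Adj v w → w ∈ H)).disjSum
        (Finset.univ.filter (fun e : {e : Sym2 V // e ∈ G.edgeFinset} => ∀ v ∈ e.val, v ∈ H)) := by
    ext (v | e) <;> simp [isSingleton_inl_iff, isSingleton_inr_iff]
  rw [sigma, hsplit, Finset.card_disjSum, add_comm]
  congr 1
  rw [Finset.card_filter, Finset.card_filter]
  exact Finset.sum_coe_sort G.edgeFinset (fun e => if ∀ v ∈ e, v ∈ H then 1 else 0)

end DkSReduction

open DkSReduction

theorem singleton_characterization_general {V : Type} [Fintype V] [DecidableEq V]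
    (G : SimpleGraph V) [DecidableRel G.Adj]
    (H : Finset V) :
    (∀ l : Leaf G, IsSingleton G H l ↔
        ((∃ e : {e : Sym2 V // e ∈ G.edgeFinset},
            l = Sum.inr e ∧ ∀ v ∈ e.val, v ∈ H) ∨
         (∃ v : V, l = Sum.inl v ∧ v ∈ H ∧ ∀ w : V, G.Adj v w → w ∈ H))) ∧
    sigma G H =
      (G.edgeFinset.filter (fun e => ∀ v ∈ e, v ∈ H)).card
        + (H.filter (fun v => ∀ w : V, G.Adj v w → w ∈ H)).card := by
  refine ⟨?_, sigma_eq_card_add_card⟩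
  rintro (v | e) <;> simp [isSingleton_inl_iff, isSingleton_inr_iff]

/-- In the Densest-k-Subgraph reduction instance, a leaf `l` is a
singleton for `H` iff `l` is an edge with both endpoints in `H`, or `l` is a vertex
of `H` all of whose neighbors lie in `H`. Consequently
`σ(H) = |E(H)| + |{v ∈ H : N_G(v) ⊆ H}|`. -/
theorem singleton_characterization {V : Type} [Fintype V] [DecidableEq V]
    (G : SimpleGraph V) [DecidableRel G.Adj]
    (hn : 2 ≤ Fintype.card V) (H : Finset V) :
    (∀ l : Leaf G, IsSingleton G H l ↔
        ((∃ e : {e : Sym2 V // e ∈ G.edgeFinset},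
            l = Sum.inr e ∧ ∀ v ∈ e.val, v ∈ H) ∨
         (∃ v : V, l = Sum.inl v ∧ v ∈ H ∧ ∀ w : V, G.Adj v w → w ∈ H))) ∧
    sigma G H =
      (G.edgeFinset.filter (fun e => ∀ v ∈ e, v ∈ H)).card
        + (H.filter (fun v => ∀ w : V, G.Adj v w → w ∈ H)).card :=
  singleton_characterization_general G H
end

section
/- Let t, r, t', r', k, m, n be nonnegative real numbers satisfying: n <= m, m*log n >= 2, r' <= k, log n * max(k, t') >= 4, and (t + r)*m*log n + (m - t + n - r) <= log n * ( (t' + r')*m*log n + (m - t' + n - r') ). Then t <= 5*log n * max(k, t'). (Here log denotes the natural logarithm.) -/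
/-!
Write `c = m log n` and `X = max k t'`. The queriability `(t + r) c + (m - t + n - r)` of the
optimal design is at least `t (c - 1)`, while that of the returned design is at most `2 X c + 2 m`
because `t', r' ≤ X` and `n ≤ m`. Multiplying the latter by `log n` gives
`t (c - 1) ≤ c (2 X log n + 2)`, and `c ≥ 2` turns this into `t ≤ 4 X log n + 4 ≤ 5 X log n`.
-/

/-- In the reduction the weight `c` is `m log n`. -/
def queriability (m n c t r : ℝ) : ℝ := (t + r) * c + (m - t + n - r)

lemma mul_sub_one_le_queriability {m n c t r : ℝ} (hr : 0 ≤ r) (hc : 1 ≤ c) (hmn : 0 ≤ m + n) :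
    t * (c - 1) ≤ queriability m n c t r := by
  unfold queriability
  nlinarith

lemma queriability_le {m n c t r X : ℝ} (ht : 0 ≤ t) (hr : 0 ≤ r) (htX : t ≤ X) (hrX : r ≤ X)
    (hc : 0 ≤ c) (hnm : n ≤ m) :
    queriability m n c t r ≤ 2 * X * c + 2 * m := by
  unfold queriability
  nlinarith

lemma le_two_mul_of_mul_sub_one_le {t c a : ℝ} (ht : 0 ≤ t) (hc : 2 ≤ c)
    (h : t * (c - 1) ≤ c * a) : t ≤ 2 * a := by
  have hhalf : t * c ≤ 2 * (t * (c - 1)) := by nlinarith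
  have hc0 : 0 < c := by linarith
  nlinarith

theorem dks_arithmetic_general (t r t' r' k m n : ℝ)
    (ht : 0 ≤ t) (hr : 0 ≤ r) (ht' : 0 ≤ t') (hr' : 0 ≤ r')
    (hn : 0 ≤ n)
    (hnm : n ≤ m)
    (hml : 2 ≤ m * Real.log n)
    (hrk : r' ≤ k)
    (hbig : 4 ≤ Real.log n * max k t')
    (happrox : (t + r) * (m * Real.log n) + (m - t + n - r) ≤
        Real.log n * ((t' + r') * (m * Real.log n) + (m - t' + n - r'))) :
    t ≤ 5 * Real.log n * max k t' := by
  set L := Real.log n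
  set X := max k t'
  have hX : 0 ≤ X := ht'.trans (le_max_right k t')
  have hL : 0 < L := pos_of_mul_pos_left (by linarith) hX
  have hlow : t * (m * L - 1) ≤ queriability m n (m * L) t r :=
    mul_sub_one_le_queriability hr (by linarith) (by linarith)
  have hup : queriability m n (m * L) t' r' ≤ 2 * X * (m * L) + 2 * m :=
    queriability_le ht' hr' (le_max_right k t') (hrk.trans (le_max_left k t')) (by linarith) hnm
  have key : t * (m * L - 1) ≤ m * L * (2 * (L * X) + 2) :=
    calc t * (m * L - 1) ≤ L * queriability m n (m * L) t' r' := hlow.trans happrox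
      _ ≤ L * (2 * X * (m * L) + 2 * m) := mul_le_mul_of_nonneg_left hup hL.le
      _ = m * L * (2 * (L * X) + 2) := by ring
  have := le_two_mul_of_mul_sub_one_le ht hml key
  linarith

/-- The arithmetic step in the proof that a `(log m)`-approximation
for cost-effective conceptual design over DAG taxonomies yields an
`O(log n)`-approximation for Densest-k-Subgraph. -/
theorem dks_arithmetic (t r t' r' k m n : ℝ)
    (ht : 0 ≤ t) (hr : 0 ≤ r) (ht' : 0 ≤ t') (hr' : 0 ≤ r')
    (hk : 0 ≤ k) (hm : 0 ≤ m) (hn : 0 ≤ n)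
    (hnm : n ≤ m)
    (hml : 2 ≤ m * Real.log n)
    (hrk : r' ≤ k)
    (hbig : 4 ≤ Real.log n * max k t')
    (happrox : (t + r) * (m * Real.log n) + (m - t + n - r) ≤
        Real.log n * ((t' + r') * (m * Real.log n) + (m - t' + n - r'))) :
    t ≤ 5 * Real.log n * max k t' :=
  dks_arithmetic_general t r t' r' k m n ht hr ht' hr' hn hnm hml hrk hbig happrox
end
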